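/- arXiv:2108.09201 — 2 statements merged into one kernel-verified Lean document; each statement's English description precedes it below -/
import Mathlib

section
/- The function G defined on (0, ∞) by G(x) = (√π/2) · (e^{x²}/x) · erf(x), where erf(x) = (2/√π) ∫₀ˣ e^{−t²} dt, is strictly increasing on (0, ∞): for all real numbers x, y with 0 < x < y, G(x) < G(y). -/
/-!
Substituting `t = x s` in the integral defining `erf` gives `G x = ∫₀¹ e^{x² (1 - s²)} ds`.
Since `1 - s² ≥ 0` on `[0, 1]`, the integrand is nondecreasing in `x²`, and strictly increasing
at `s = 0`; continuity turns this into strict monotonicity of the integral.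
-/

open Real

/-- The error function `erf x = (2/√π) ∫₀ˣ e^{−t²} dt`. -/
noncomputable def erf (x : ℝ) : ℝ :=
  (2 / Real.sqrt π) * ∫ t in (0:ℝ)..x, Real.exp (-t ^ 2)

/-- `G x = (√π/2) · (e^{x²}/x) · erf x`. -/
noncomputable def G (x : ℝ) : ℝ :=
  (Real.sqrt π / 2) * (Real.exp (x ^ 2) / x) * erf x

lemma strictMono_integral_exp_mul_one_sub_sq :
    StrictMono fun a : ℝ => ∫ s in (0:ℝ)..1, exp (a * (1 - s ^ 2)) := by
  intro a b hab
  have hcont : ∀ c : ℝ, ContinuousOn (fun s : ℝ => exp (c * (1 - s ^ 2))) (Set.Icc 0 1) :=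
    fun c => by fun_prop
  refine intervalIntegral.integral_lt_integral_of_continuousOn_of_le_of_exists_lt zero_lt_one
    (hcont a) (hcont b) (fun s hs => ?_) ⟨0, by norm_num, by simpa using hab⟩
  have hs_sq : 0 ≤ 1 - s ^ 2 := by nlinarith [hs.1, hs.2]
  exact exp_le_exp.2 (mul_le_mul_of_nonneg_right hab.le hs_sq)

lemma G_eq_integral {x : ℝ} (hx : 0 < x) :
    G x = ∫ s in (0:ℝ)..1, exp (x ^ 2 * (1 - s ^ 2)) := by
  have h_subst : ∫ s in (0:ℝ)..1, exp (-(x * s) ^ 2) = x⁻¹ * ∫ t in (0:ℝ)..x, exp (-t ^ 2) := by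
    simpa using intervalIntegral.integral_comp_mul_left (fun t => exp (-t ^ 2)) hx.ne'
      (a := 0) (b := 1)
  have h_exp (s : ℝ) : exp (x ^ 2 * (1 - s ^ 2)) = exp (x ^ 2) * exp (-(x * s) ^ 2) := by
    rw [← exp_add]; ring_nf
  calc G x = exp (x ^ 2) * (x⁻¹ * ∫ t in (0:ℝ)..x, exp (-t ^ 2)) := by
        have : Real.sqrt π ≠ 0 := by positivity
        unfold G erf
        field_simp
    _ = ∫ s in (0:ℝ)..1, exp (x ^ 2 * (1 - s ^ 2)) := by
        simp_rw [h_exp, intervalIntegral.integral_const_mul, h_subst]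

/-- `G` is strictly increasing on `(0, ∞)`. -/
theorem G_strictMonoOn : ∀ x y : ℝ, 0 < x → x < y → G x < G y := by
  intro x y hx hxy
  rw [G_eq_integral hx, G_eq_integral (hx.trans hxy)]
  exact strictMono_integral_exp_mul_one_sub_sq (pow_lt_pow_left₀ hxy hx.le two_ne_zero)
end

section
/- The function G defined by G(x) = (√π/2) · (e^{x²}/x) · erf(x) maps the interval (0, ∞) bijectively onto the interval (1, ∞); in particular its inverse G⁻¹ : (1, ∞) → (0, ∞) is well defined. -/
open Real

/-!
Substituting `t = x s` in the error-function integral gives `G x = ∫₀¹ e^{x²(1−s²)} ds` for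
`x ≠ 0`. The right-hand side is continuous on `ℝ`, equals `1` at `x = 0`, is strictly increasing
in `x ≥ 0` because its integrand is, and is at least `1 + 2x²/3` because `eᵘ ≥ 1 + u`. A
continuous strictly increasing function on `[0, ∞)` tending to `∞` maps `(0, ∞)` onto
`(value at 0, ∞)`.
-/

open Set Filter

theorem StrictMonoOn.bijOn_Ioi_of_tendsto_atTop {α δ : Type*}
    [ConditionallyCompleteLinearOrder α] [TopologicalSpace α] [OrderTopology α]
    [DenselyOrdered α] [LinearOrder δ] [TopologicalSpace δ] [OrderClosedTopology δ]
    [NoMaxOrder δ] {f : α → δ} {a : α} (hmono : StrictMonoOn f (Ici a))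
    (hcont : ContinuousOn f (Ici a)) (htop : Tendsto f atTop atTop) :
    BijOn f (Ioi a) (Ioi (f a)) := by
  refine ⟨fun x hx => hmono self_mem_Ici (le_of_lt hx) hx,
    hmono.injOn.mono Ioi_subset_Ici_self, fun y hy => ?_⟩
  obtain ⟨b, hyb, hab⟩ := ((htop.eventually_gt_atTop y).and (eventually_ge_atTop a)).exists
  obtain ⟨x, hx, rfl⟩ :=
    intermediate_value_Ioo hab (hcont.mono Icc_subset_Ici_self) ⟨hy, hyb⟩
  exact ⟨x, hx.1, rfl⟩

noncomputable def GIntegral (x : ℝ) : ℝ := ∫ s in (0:ℝ)..1, exp (x ^ 2 * (1 - s ^ 2))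

theorem G_eq_GIntegral {x : ℝ} (hx : x ≠ 0) : G x = GIntegral x := by
  have hsplit (s : ℝ) : exp (x ^ 2 * (1 - s ^ 2)) = exp (x ^ 2) * exp (-(x * s) ^ 2) := by
    rw [← exp_add]; ring_nf
  have hsubst : GIntegral x = exp (x ^ 2) * (x⁻¹ * ∫ t in (0:ℝ)..x, exp (-t ^ 2)) := by
    simp only [GIntegral, hsplit, intervalIntegral.integral_const_mul,
      intervalIntegral.integral_comp_mul_left (fun t => exp (-t ^ 2)) hx, mul_zero, mul_one,
      smul_eq_mul]
  have hpi : sqrt π ≠ 0 := (sqrt_pos.mpr pi_pos).ne'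
  rw [hsubst, G, erf]
  field_simp

theorem GIntegral_zero : GIntegral 0 = 1 := by simp [GIntegral]

theorem continuous_GIntegral : Continuous GIntegral :=
  intervalIntegral.continuous_parametric_intervalIntegral_of_continuous' (by fun_prop) 0 1

theorem strictMonoOn_GIntegral : StrictMonoOn GIntegral (Ici 0) := by
  intro a ha b _ hab
  have hsq : a ^ 2 < b ^ 2 := by gcongr
  refine intervalIntegral.integral_lt_integral_of_continuousOn_of_le_of_exists_lt one_pos
    (by fun_prop) (by fun_prop) (fun s hs => ?_) ⟨0, by simp, by simpa using hsq⟩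
  have : 0 ≤ 1 - s ^ 2 := by nlinarith [hs.1, hs.2]
  gcongr

theorem one_add_le_GIntegral (x : ℝ) : 1 + 2 / 3 * x ^ 2 ≤ GIntegral x := by
  calc 1 + 2 / 3 * x ^ 2 = ∫ s in (0:ℝ)..1, (x ^ 2 * (1 - s ^ 2) + 1) := by
        rw [intervalIntegral.integral_add, intervalIntegral.integral_const_mul,
          intervalIntegral.integral_sub]
        · norm_num [integral_pow]; ring
        all_goals exact Continuous.intervalIntegrable (by fun_prop) _ _
    _ ≤ GIntegral x := intervalIntegral.integral_mono_on zero_le_one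
        (Continuous.intervalIntegrable (by fun_prop) _ _)
        (Continuous.intervalIntegrable (by fun_prop) _ _) fun s _ => add_one_le_exp _

theorem tendsto_GIntegral_atTop : Tendsto GIntegral atTop atTop :=
  tendsto_atTop_mono one_add_le_GIntegral <| tendsto_atTop_add_const_left _ _ <|
    (tendsto_pow_atTop two_ne_zero).const_mul_atTop (by norm_num)

/-- `G` maps `(0, ∞)` bijectively onto `(1, ∞)`. -/
theorem G_bijOn : Set.BijOn G (Set.Ioi (0 : ℝ)) (Set.Ioi (1 : ℝ)) := by
  have h := strictMonoOn_GIntegral.bijOn_Ioi_of_tendsto_atTop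
    continuous_GIntegral.continuousOn tendsto_GIntegral_atTop
  rw [GIntegral_zero] at h
  exact h.congr fun x hx => (G_eq_GIntegral (ne_of_gt hx)).symm
end
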